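/- arXiv:2111.04535 — 3 statements merged into one kernel-verified Lean document; each statement's English description precedes it below -/
import Mathlib

section
/- Let n ≥ 1, r ≥ 0 and t ≥ max(n, r) be integers. For ((a,b;c,d), z) ∈ U^H₁(p^t), one has ι((a,b;c,d), z) ∈ u·U_{n,p}·u^{−1} (conjugation inside GL₃(ℚ_p)) if and only if b ∈ pⁿℤ_p and a − z ∈ pⁿℤ_p. Equivalently, U^H₁(p^t) ∩ ι^{−1}(u U_{n,p} u^{−1}) = {((a,b;c,d), z) ∈ U^H₁(p^t) : b ≡ 0 (mod pⁿℤ_p) and a ≡ z (mod pⁿℤ_p)}. -/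
noncomputable section

/-- The twisting element `u = [[1,0,1],[0,1,0],[0,0,1]]·[[1,0,0],[0,0,−1],[0,1,0]]
  = [[1,1,0],[0,0,−1],[0,1,0]] ∈ GL₃(ℤ_p)`. -/
def uMat (p : ℕ) [Fact p.Prime] : Matrix (Fin 3) (Fin 3) ℤ_[p] :=
  !![1, 1, 0; 0, 0, -1; 0, 1, 0]

/-- The embedding `ι : GL₂(ℤ_p) × ℤ_p^× → GL₃(ℤ_p)`, `((a,b;c,d), z) ↦ [[a,b,0],[c,d,0],[0,0,z]]`,
written at the level of matrices. -/
def iotaMat (p : ℕ) [Fact p.Prime] (γ : (Matrix (Fin 2) (Fin 2) ℤ_[p])ˣ) (z : ℤ_[p]ˣ) :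
    Matrix (Fin 3) (Fin 3) ℤ_[p] :=
  !![(γ : Matrix (Fin 2) (Fin 2) ℤ_[p]) 0 0, (γ : Matrix (Fin 2) (Fin 2) ℤ_[p]) 0 1, 0;
     (γ : Matrix (Fin 2) (Fin 2) ℤ_[p]) 1 0, (γ : Matrix (Fin 2) (Fin 2) ℤ_[p]) 1 1, 0;
     0, 0, (z : ℤ_[p])]

/-- The level group `U_{n,p} ⊂ GL₃(ℤ_p)`: all `g ∈ GL₃(ℤ_p)` with `g₁₂, g₁₃ ∈ pⁿℤ_p`,
`g₃₁, g₃₂ ∈ p^rℤ_p` and `g₃₃ ∈ 1 + p^rℤ_p` (viewed as the set of invertible matrices over `ℤ_p`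
satisfying these congruences). -/
def Unp (p : ℕ) [Fact p.Prime] (n r : ℕ) : Set (Matrix (Fin 3) (Fin 3) ℤ_[p]) :=
  {g | IsUnit g ∧
       (p : ℤ_[p]) ^ n ∣ g 0 1 ∧ (p : ℤ_[p]) ^ n ∣ g 0 2 ∧
       (p : ℤ_[p]) ^ r ∣ g 2 0 ∧ (p : ℤ_[p]) ^ r ∣ g 2 1 ∧
       (p : ℤ_[p]) ^ r ∣ (g 2 2 - 1)}

/-- Inverse of the twisting element. -/
def uInvMat (p : ℕ) [Fact p.Prime] : Matrix (Fin 3) (Fin 3) ℤ_[p] :=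
  !![1, 0, -1; 0, 0, 1; 0, -1, 0]

lemma uMat_mul_uInv (p : ℕ) [Fact p.Prime] : uMat p * uInvMat p = 1 := by
  ext i j
  fin_cases i <;> fin_cases j <;>
    simp [uMat, uInvMat, Matrix.mul_apply, Fin.sum_univ_three, Matrix.one_apply, Matrix.vecHead, Matrix.vecTail]

lemma uInv_mul_uMat (p : ℕ) [Fact p.Prime] : uInvMat p * uMat p = 1 :=
  mul_eq_one_comm.mp (uMat_mul_uInv p)

lemma conj_eq (p : ℕ) [Fact p.Prime] (γ : (Matrix (Fin 2) (Fin 2) ℤ_[p])ˣ) (z : ℤ_[p]ˣ) :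
    uInvMat p * iotaMat p γ z * uMat p =
      !![(γ : Matrix (Fin 2) (Fin 2) ℤ_[p]) 0 0,
         (γ : Matrix (Fin 2) (Fin 2) ℤ_[p]) 0 0 - (z : ℤ_[p]),
         -(γ : Matrix (Fin 2) (Fin 2) ℤ_[p]) 0 1;
         0, (z : ℤ_[p]), 0;
         -(γ : Matrix (Fin 2) (Fin 2) ℤ_[p]) 1 0,
         -(γ : Matrix (Fin 2) (Fin 2) ℤ_[p]) 1 0,
         (γ : Matrix (Fin 2) (Fin 2) ℤ_[p]) 1 1] := by
  ext i j
  fin_cases i <;> fin_cases j <;>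
    simp [uMat, uInvMat, iotaMat, Matrix.mul_apply, Fin.sum_univ_three, Matrix.vecHead, Matrix.vecTail] <;> ring

/-- **Intersection level computation (membership criterion).**
Let `n ≥ 1`, `r ≥ 0` and `t ≥ max(n, r)`.  For `((a,b;c,d), z) ∈ U^H₁(p^t)` (that is,
`c ∈ p^tℤ_p` and `d ∈ 1 + p^tℤ_p`), one has `ι((a,b;c,d), z) ∈ u·U_{n,p}·u^{−1}` if and only if
`b ∈ pⁿℤ_p` and `a − z ∈ pⁿℤ_p`. -/
theorem stmt_1 (p : ℕ) [Fact p.Prime] (n r t : ℕ) (hn : 1 ≤ n) (ht : max n r ≤ t)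
    (γ : (Matrix (Fin 2) (Fin 2) ℤ_[p])ˣ) (z : ℤ_[p]ˣ)
    (hc : (p : ℤ_[p]) ^ t ∣ (γ : Matrix (Fin 2) (Fin 2) ℤ_[p]) 1 0)
    (hd : (p : ℤ_[p]) ^ t ∣ ((γ : Matrix (Fin 2) (Fin 2) ℤ_[p]) 1 1 - 1)) :
    (∃ g ∈ Unp p n r, iotaMat p γ z = uMat p * g * (uMat p)⁻¹) ↔
      ((p : ℤ_[p]) ^ n ∣ (γ : Matrix (Fin 2) (Fin 2) ℤ_[p]) 0 1 ∧
       (p : ℤ_[p]) ^ n ∣ ((γ : Matrix (Fin 2) (Fin 2) ℤ_[p]) 0 0 - (z : ℤ_[p]))) := by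
  have hAB := uMat_mul_uInv p
  have hBA := uInv_mul_uMat p
  have hinv : (uMat p)⁻¹ = uInvMat p := Matrix.inv_eq_right_inv hAB
  have hrt : r ≤ t := le_trans (le_max_right n r) ht
  have hg := conj_eq p γ z
  have hUu : IsUnit (uMat p) := ⟨⟨uMat p, uInvMat p, hAB, hBA⟩, rfl⟩
  have hUb : IsUnit (uInvMat p) := ⟨⟨uInvMat p, uMat p, hBA, hAB⟩, rfl⟩
  have hUi : IsUnit (iotaMat p γ z) := by
    rw [Matrix.isUnit_iff_isUnit_det]
    have hdet : (iotaMat p γ z).det =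
        (γ : Matrix (Fin 2) (Fin 2) ℤ_[p]).det * (z : ℤ_[p]) := by
      rw [Matrix.det_fin_three, Matrix.det_fin_two, iotaMat]
      simp; ring
    rw [hdet]
    exact (((Matrix.isUnit_iff_isUnit_det _).mp γ.isUnit).mul z.isUnit)
  rw [hinv]
  constructor
  · rintro ⟨g, ⟨-, h01, h02, -⟩, hEq⟩
    have hgE : g = uInvMat p * iotaMat p γ z * uMat p := by
      have h2 : uInvMat p * (uMat p * g * uInvMat p) * uMat p
          = (uInvMat p * uMat p) * g * (uInvMat p * uMat p) := by noncomm_ring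
      rw [hEq, h2, hBA, one_mul, mul_one]
    rw [hgE, hg] at h01 h02
    simp at h01 h02
    exact ⟨h02, h01⟩
  · rintro ⟨hb, haz⟩
    refine ⟨uInvMat p * iotaMat p γ z * uMat p, ⟨(hUb.mul hUi).mul hUu, ?_⟩, ?_⟩
    · rw [hg]
      refine ⟨?_, ?_, ?_, ?_, ?_⟩
      · simpa using haz
      · simpa using dvd_neg.mpr hb
      · simpa using dvd_neg.mpr ((pow_dvd_pow _ hrt).trans hc)
      · simpa using dvd_neg.mpr ((pow_dvd_pow _ hrt).trans hc)
      · simpa using (pow_dvd_pow _ hrt).trans hd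
    · have h3 : uMat p * (uInvMat p * iotaMat p γ z * uMat p) * uInvMat p
          = (uMat p * uInvMat p) * iotaMat p γ z * (uMat p * uInvMat p) := by noncomm_ring
      rw [h3, hAB, one_mul, mul_one]
end
end

section
/- Let p be a prime and R ≥ 1 an integer. If g ∈ GL₂(ℚ_p) is such that Φ_R((0,a)·g) ≠ 0 for some a ∈ ℚ_p^× — in particular, whenever f_{Φ_R}(g; χ, s) ≠ 0 for some χ and s — then g ∈ B₂(ℚ_p)·K₀(p^R), i.e. g = b·k for some upper-triangular b ∈ GL₂(ℚ_p) and some k ∈ GL₂(ℤ_p) with k₂₁ ∈ p^Rℤ_p. -/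
noncomputable section

/-- The Schwartz function `Φ_R = ch((0,1) + p^Rℤ_p²) : ℚ_p² → ℂ`, the characteristic function
of the set of `(x,y)` with `x ∈ p^Rℤ_p` and `y ∈ 1 + p^Rℤ_p`. -/
def PhiR (p : ℕ) [Fact p.Prime] (R : ℕ) : ℚ_[p] × ℚ_[p] → ℂ :=
  Set.indicator {xy : ℚ_[p] × ℚ_[p] |
    ‖xy.1‖ ≤ (p : ℝ) ^ (-(R : ℤ)) ∧ ‖xy.2 - 1‖ ≤ (p : ℝ) ^ (-(R : ℤ))} 1

/-!
If `Φ_R(a g₂₁, a g₂₂) ≠ 0` then `a g₂₂ ∈ 1 + p^Rℤ_p` is a unit and `a g₂₁ ∈ p^Rℤ_p`, so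
`c = g₂₁ / g₂₂` lies in `p^Rℤ_p`. Then `g = b k` with `k = [[1, 0], [c, 1]] ∈ K₀(p^R)` and
`b = g k⁻¹`, whose lower-left entry `g₂₁ - c g₂₂` vanishes.
-/

section LowerUnipotent

variable {K : Type*}

lemma lowerUnipotent_mul_lowerUnipotent_neg [Ring K] (c : K) :
    !![1, 0; c, 1] * !![1, 0; -c, 1] = (1 : Matrix (Fin 2) (Fin 2) K) := by
  simp [Matrix.one_fin_two]

lemma lowerUnipotent_neg_mul_lowerUnipotent [Ring K] (c : K) :
    !![1, 0; -c, 1] * !![1, 0; c, 1] = (1 : Matrix (Fin 2) (Fin 2) K) := by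
  simpa using lowerUnipotent_mul_lowerUnipotent_neg (-c)

lemma eq_mul_lowerUnipotent_of_apply_one_one_ne_zero [Field K]
    {g : Matrix (Fin 2) (Fin 2) K} (hg : IsUnit g) (h11 : g 1 1 ≠ 0) :
    ∃ b : Matrix (Fin 2) (Fin 2) K,
      IsUnit b ∧ b 1 0 = 0 ∧ g = b * !![1, 0; g 1 0 / g 1 1, 1] := by
  set c := g 1 0 / g 1 1
  refine ⟨g * !![1, 0; -c, 1], hg.mul ?_, ?_, ?_⟩
  · exact ⟨⟨_, _, lowerUnipotent_neg_mul_lowerUnipotent c,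
      lowerUnipotent_mul_lowerUnipotent_neg c⟩, rfl⟩
  · simp [c, Matrix.mul_apply, Fin.sum_univ_two, mul_div_cancel₀ _ h11]
  · rw [Matrix.mul_assoc, lowerUnipotent_neg_mul_lowerUnipotent, Matrix.mul_one]

lemma norm_lowerUnipotent_apply_le_one [NormedField K] {c : K} (hc : ‖c‖ ≤ 1) (i j : Fin 2) :
    ‖(!![1, 0; c, 1] : Matrix (Fin 2) (Fin 2) K) i j‖ ≤ 1 := by
  fin_cases i <;> fin_cases j <;> simp [hc]

end LowerUnipotent

lemma PhiR_ne_zero_iff {p : ℕ} [Fact p.Prime] {R : ℕ} {x y : ℚ_[p]} :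
    PhiR p R (x, y) ≠ 0 ↔
      ‖x‖ ≤ (p : ℝ) ^ (-(R : ℤ)) ∧ ‖y - 1‖ ≤ (p : ℝ) ^ (-(R : ℤ)) := by
  simp [PhiR]

lemma natCast_zpow_neg_lt_one (p : ℕ) [hp : Fact p.Prime] {R : ℕ} (hR : 1 ≤ R) :
    (p : ℝ) ^ (-(R : ℤ)) < 1 :=
  zpow_lt_one_of_neg₀ (by exact_mod_cast hp.out.one_lt) (by omega)

theorem stmt_6_general (p : ℕ) [Fact p.Prime] (R : ℕ) (hR : 1 ≤ R)
    (g : Matrix (Fin 2) (Fin 2) ℚ_[p]) (hg : IsUnit g)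
    (a : ℚ_[p])
    (hsupp : PhiR p R (a * g 1 0, a * g 1 1) ≠ 0) :
    ∃ b k : Matrix (Fin 2) (Fin 2) ℚ_[p],
      IsUnit b ∧ b 1 0 = 0 ∧
      (∀ i j, ‖k i j‖ ≤ 1) ∧ ‖k.det‖ = 1 ∧
      ‖k 1 0‖ ≤ (p : ℝ) ^ (-(R : ℤ)) ∧
      g = b * k := by
  obtain ⟨h10, h11⟩ := PhiR_ne_zero_iff.mp hsupp
  have hpR := natCast_zpow_neg_lt_one p hR
  have hunit : ‖a * g 1 1‖ = 1 := by
    simpa only [norm_one] using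
      Padic.norm_eq_of_norm_sub_lt_right (z2 := 1) (by simpa using h11.trans_lt hpR)
  have hg11 : g 1 1 ≠ 0 := by rintro h; simp [h] at hunit
  have hc : ‖g 1 0 / g 1 1‖ ≤ (p : ℝ) ^ (-(R : ℤ)) := by
    have ha : a ≠ 0 := by rintro rfl; simp at hunit
    rwa [← mul_div_mul_left _ _ ha, norm_div, hunit, div_one]
  obtain ⟨b, hb, hb10, hgb⟩ := eq_mul_lowerUnipotent_of_apply_one_one_ne_zero hg hg11
  exact ⟨b, _, hb, hb10, norm_lowerUnipotent_apply_le_one (hc.trans hpR.le),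
    by simp [Matrix.det_fin_two], by simpa using hc, hgb⟩

/-- **Support of the Siegel section `f_{Φ_R}`.**
Let `p` be a prime and `R ≥ 1`.  If `g ∈ GL₂(ℚ_p)` is such that `Φ_R((0,a)·g) ≠ 0` for some
`a ∈ ℚ_p^×`, then `g ∈ B₂(ℚ_p)·K₀(p^R)`: that is, `g = b·k` with `b` upper-triangular and
invertible, and `k ∈ GL₂(ℤ_p)` (all entries of norm `≤ 1` and `‖det k‖ = 1`) with
`k₂₁ ∈ p^Rℤ_p`. -/
theorem stmt_6 (p : ℕ) [Fact p.Prime] (R : ℕ) (hR : 1 ≤ R)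
    (g : Matrix (Fin 2) (Fin 2) ℚ_[p]) (hg : IsUnit g)
    (a : ℚ_[p]) (ha : a ≠ 0)
    (hsupp : PhiR p R (a * g 1 0, a * g 1 1) ≠ 0) :
    ∃ b k : Matrix (Fin 2) (Fin 2) ℚ_[p],
      IsUnit b ∧ b 1 0 = 0 ∧
      (∀ i j, ‖k i j‖ ≤ 1) ∧ ‖k.det‖ = 1 ∧
      ‖k 1 0‖ ≤ (p : ℝ) ^ (-(R : ℤ)) ∧
      g = b * k :=
  stmt_6_general p R hR g hg a hsupp
end
end

section
/- Let p be a prime, L/ℚ_p a finite extension with ring of integers O and maximal ideal m, N ≥ 1 an integer, and χ a Dirichlet character modulo N with values in O^×. Suppose there is no Dirichlet character θ of p-power conductor, valued in O^×, such that χ(c) ≡ θ(c) (mod m) for all integers c coprime to Np. Then for every n ≥ 1 there exists an integer c > 1 with gcd(c, 6Np) = 1, c ≡ 1 (mod pⁿ), and χ(c) ≢ 1 (mod m); in particular χ(c) − 1 ∈ O^× for such c. -/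
/-! Suppose every `c > 1` prime to `6Np` with `c ≡ 1 mod pⁿ` had `χ(c) ≡ 1 mod m`. Write
`N = p^v M` with `p ∤ M` and put `Q = M p^k`, `k = v + 1 + n`. Every unit of `ZMod Q` is
represented by such a `c` as soon as it is `≡ 1 mod p^k`, so `χ` (pulled back to `(ZMod Q)ˣ`) is
`≡ 1 mod m` on the kernel of reduction to `(ZMod p^k)ˣ`. That reduction has a section by the
Chinese remainder theorem, and `χ` composed with the section is a character `θ` of level `p^k`
with `χ ≡ θ mod m`, contradicting the hypothesis. -/

namespace ZMod

theorem exists_natCast_eq_unit_one_lt_coprime_mul {Q : ℕ} [NeZero Q] (d : ℕ) [NeZero d]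
    (u : (ZMod Q)ˣ) : ∃ c : ℕ, 1 < c ∧ c.Coprime (d * Q) ∧ (c : ZMod Q) = u := by
  obtain ⟨w, rfl⟩ := unitsMap_surjective (dvd_mul_left Q d) u
  refine ⟨(w : ZMod (d * Q)).val + 2 * (d * Q), ?_, ?_, ?_⟩
  · have : 0 < d * Q := Nat.pos_of_ne_zero (NeZero.ne _)
    omega
  · exact (Nat.coprime_add_mul_right_left _ _ _).2 (val_coe_unit_coprime w)
  · simp [unitsMap_val]

theorem natCast_eq_unitsMap {n m : ℕ} (h : n ∣ m) {c : ℕ} {g : (ZMod m)ˣ}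
    (hc : (c : ZMod m) = g) : (c : ZMod n) = unitsMap h g := by
  rw [unitsMap_val, ← hc, cast_natCast h]

theorem exists_unitsMap_rightInverse {m n : ℕ} (h : m.Coprime n) :
    ∃ s : (ZMod n)ˣ →* (ZMod (m * n))ˣ, ∀ x, unitsMap (dvd_mul_left n m) (s x) = x := by
  let e := (Units.mapEquiv (chineseRemainder h).toMulEquiv).trans MulEquiv.prodUnits
  refine ⟨e.symm.toMonoidHom.comp (MonoidHom.inr _ _), fun x => Units.ext ?_⟩
  have hsnd : ((chineseRemainder h) (e.symm (1, x) : ZMod (m * n))).2 = x := by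
    simp [e, MulEquiv.prodUnits]
  rw [unitsMap_val, ← hsnd]
  exact (Prod.snd_zmod_cast _).symm

end ZMod

theorem MonoidHom.sub_map_section_mem {G H R : Type*} [Group G] [Group H] [CommRing R]
    {I : Ideal R} (f : G →* R) {π : G →* H} {s : H →* G} (hs : ∀ x, π (s x) = x)
    (hf : ∀ g, π g = 1 → f g - 1 ∈ I) (g : G) : f g - f (s (π g)) ∈ I := by
  have hker : π (g * (s (π g))⁻¹) = 1 := by rw [map_mul, map_inv, hs, mul_inv_cancel]
  have hsplit : f g = f (g * (s (π g))⁻¹) * f (s (π g)) := by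
    rw [← map_mul, inv_mul_cancel_right]
  rw [hsplit, ← sub_one_mul]
  exact I.mul_mem_right _ (hf _ hker)

namespace DirichletCharacter

theorem exists_primePow_level_sub_mem_of_forall_sub_one_mem {R : Type*} [CommRing R]
    {I : Ideal R} {p N : ℕ} [Fact p.Prime] (hN : N ≠ 0) (χ : DirichletCharacter R N)
    (d : ℕ) [NeZero d] (n : ℕ)
    (H : ∀ c : ℕ, 1 < c → c.Coprime (d * N * p) → (c : ZMod (p ^ n)) = 1 →
      χ (c : ZMod N) - 1 ∈ I) :
    ∃ (k : ℕ) (θ : DirichletCharacter R (p ^ k)),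
      ∀ c : ℕ, c.Coprime (N * p) → χ (c : ZMod N) - θ (c : ZMod (p ^ k)) ∈ I := by
  have hp : p.Prime := Fact.out
  obtain ⟨v, M, hpM, rfl⟩ := Nat.exists_eq_pow_mul_and_not_dvd hN p hp.ne_one
  have hMp : M.Coprime p := ((hp.coprime_iff_not_dvd).2 hpM).symm
  have hM : M ≠ 0 := right_ne_zero_of_mul hN
  set k := v + 1 + n
  set Q := M * p ^ k
  have : NeZero Q := ⟨mul_ne_zero hM (pow_ne_zero _ hp.ne_zero)⟩
  have hNpQ : p ^ v * M * p ∣ Q := ⟨p ^ n, by ring⟩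
  have hNQ : p ^ v * M ∣ Q := (dvd_mul_right _ p).trans hNpQ
  have hpkQ : p ^ k ∣ Q := dvd_mul_left _ M
  obtain ⟨s, hs⟩ := ZMod.exists_unitsMap_rightInverse (hMp.pow_right k)
  let f : (ZMod Q)ˣ →* R := (Units.coeHom R).comp (χ.toUnitHom.comp (ZMod.unitsMap hNQ))
  have hf : ∀ g, ZMod.unitsMap hpkQ g = 1 → f g - 1 ∈ I := by
    intro g hg
    obtain ⟨c, hc1, hc, hcg⟩ := ZMod.exists_natCast_eq_unit_one_lt_coprime_mul d g
    have hpnk : p ^ n ∣ p ^ k := pow_dvd_pow p (by omega)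
    have hcpn : (c : ZMod (p ^ n)) = 1 := by
      rw [ZMod.natCast_eq_unitsMap (hpnk.trans hpkQ) hcg, ← ZMod.unitsMap_comp hpnk hpkQ]
      simp [hg]
    convert H c hc1 (hc.coprime_dvd_right (mul_assoc d _ p ▸ mul_dvd_mul_left d hNpQ)) hcpn
    simp [f, ZMod.natCast_eq_unitsMap hNQ hcg]
  refine ⟨k, MulChar.ofUnitHom (χ.toUnitHom.comp ((ZMod.unitsMap hNQ).comp s)), fun c hc => ?_⟩
  have hcQ : c.Coprime Q :=
    (hc.coprime_dvd_right ((dvd_mul_left M _).mul_right p)).mul_right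
      ((hc.coprime_dvd_right (dvd_mul_left p _)).pow_right k)
  convert f.sub_map_section_mem hs hf (ZMod.unitOfCoprime c hcQ) using 2
  · simp [f, ZMod.natCast_eq_unitsMap hNQ (ZMod.coe_unitOfCoprime c hcQ).symm]
  · rw [ZMod.natCast_eq_unitsMap hpkQ (ZMod.coe_unitOfCoprime c hcQ).symm, MulChar.ofUnitHom_coe]
    rfl

end DirichletCharacter

theorem stmt_9_general (p : ℕ) [Fact p.Prime] (O : Type*) [CommRing O] [IsLocalRing O]
    (N : ℕ) (hN : 1 ≤ N) (χ : DirichletCharacter O N)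
    (hχ : ¬ ∃ (k : ℕ) (θ : DirichletCharacter O (p ^ k)),
        ∀ c : ℕ, Nat.Coprime c (N * p) →
          χ (c : ZMod N) - θ (c : ZMod (p ^ k)) ∈ IsLocalRing.maximalIdeal O)
    (n : ℕ) :
    ∃ c : ℕ, 1 < c ∧ Nat.Coprime c (6 * N * p) ∧ (c : ZMod (p ^ n)) = 1 ∧
      χ (c : ZMod N) - 1 ∉ IsLocalRing.maximalIdeal O ∧
      IsUnit (χ (c : ZMod N) - 1) := by
  by_contra! h
  refine hχ (χ.exists_primePow_level_sub_mem_of_forall_sub_one_mem (by omega) 6 n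
    fun c hc1 hc hcpn => ?_)
  by_contra hcm
  exact h c hc1 hc hcpn hcm (IsLocalRing.notMem_maximalIdeal.1 hcm)

/-- **Choice of the auxiliary smoothing integer `c`.**
Let `p` be a prime, `L/ℚ_p` a finite extension with ring of integers `O` and maximal ideal `m`
(encoded here: `O` is a local domain, finite as a `ℤ_p`-algebra, with `ℤ_p ↪ O`), `N ≥ 1` an
integer, and `χ` a Dirichlet character modulo `N` with values in `O^×`.  Suppose there is no
Dirichlet character `θ` of `p`-power conductor, valued in `O^×`, such that
`χ(c) ≡ θ(c) (mod m)` for all integers `c` coprime to `Np`.  Then for every `n ≥ 1` there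
exists an integer `c > 1` with `gcd(c, 6Np) = 1`, `c ≡ 1 (mod pⁿ)`, and `χ(c) ≢ 1 (mod m)`;
in particular `χ(c) − 1 ∈ O^×` for such `c`. -/
theorem stmt_9 (p : ℕ) [Fact p.Prime] (O : Type*) [CommRing O] [IsDomain O] [IsLocalRing O]
    [Algebra ℤ_[p] O] [Module.Finite ℤ_[p] O]
    (hinj : Function.Injective (algebraMap ℤ_[p] O))
    (N : ℕ) (hN : 1 ≤ N) (χ : DirichletCharacter O N)
    (hχ : ¬ ∃ (k : ℕ) (θ : DirichletCharacter O (p ^ k)),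
        ∀ c : ℕ, Nat.Coprime c (N * p) →
          χ (c : ZMod N) - θ (c : ZMod (p ^ k)) ∈ IsLocalRing.maximalIdeal O)
    (n : ℕ) (hn : 1 ≤ n) :
    ∃ c : ℕ, 1 < c ∧ Nat.Coprime c (6 * N * p) ∧ (c : ZMod (p ^ n)) = 1 ∧
      χ (c : ZMod N) - 1 ∉ IsLocalRing.maximalIdeal O ∧
      IsUnit (χ (c : ZMod N) - 1) :=
  stmt_9_general p O N hN χ hχ n
end
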